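/- arXiv:1910.04125 — 4 statements merged into one kernel-verified Lean document; each statement's English description precedes it below -/
import Mathlib

section
/- Let G = (V,E) be a finite undirected graph, k a natural number, and R_0 ≥ R_1 ≥ ... ≥ R_k ≥ 0. Define f(D) = Σ_{v ∈ V, dist(v,D) ≤ k} R_{dist(v,D)}. Then f is submodular: for all sets D ⊆ D' ⊆ V and every u ∉ D', f(D ∪ {u}) − f(D) ≥ f(D' ∪ {u}) − f(D'). -/
open Finset

/-- Graph distance (in `ℕ∞`) from a vertex to a finite set of vertices:
the minimum over `u ∈ D` of the graph distance from `v` to `u`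
(`⊤` if `D` is empty or no vertex of `D` is reachable from `v`). -/
noncomputable def setDist {V : Type*} (G : SimpleGraph V) (v : V) (D : Finset V) : ℕ∞ :=
  ⨅ u ∈ D, G.edist v u

/-- The deterministic RMKCG revenue: each vertex within distance `k` of the
invited set `D` contributes `R` of its distance, others contribute `0`. -/
noncomputable def revenue {V : Type*} [Fintype V] (G : SimpleGraph V) (k : ℕ)
    (R : ℕ → ℝ) (D : Finset V) : ℝ :=
  ∑ v : V, if setDist G v D ≤ (k : ℕ∞) then R (setDist G v D).toNat else 0


noncomputable def contrib (k : ℕ) (R : ℕ → ℝ) (d : ℕ∞) : ℝ :=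
  if d ≤ (k : ℕ∞) then R d.toNat else 0

lemma contrib_anti {k : ℕ} {R : ℕ → ℝ}
    (hR_nonneg : ∀ i ≤ k, 0 ≤ R i)
    (hR_anti : ∀ i j, i ≤ j → j ≤ k → R j ≤ R i)
    {a b : ℕ∞} (hab : a ≤ b) : contrib k R b ≤ contrib k R a := by
  unfold contrib
  by_cases hb : b ≤ (k : ℕ∞)
  · have ha : a ≤ (k : ℕ∞) := le_trans hab hb
    rw [if_pos hb, if_pos ha]
    exact hR_anti _ _ (ENat.toNat_le_toNat hab (hb.trans_lt (ENat.coe_lt_top k)).ne)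
      (ENat.toNat_le_of_le_coe hb)
  · rw [if_neg hb]
    by_cases ha : a ≤ (k : ℕ∞)
    · rw [if_pos ha]
      exact hR_nonneg _ (ENat.toNat_le_of_le_coe ha)
    · rw [if_neg ha]

lemma setDist_insert {V : Type*} [DecidableEq V] (G : SimpleGraph V) (v u : V) (D : Finset V) :
    setDist G v (insert u D) = (G.edist v u) ⊓ (setDist G v D) := by
  unfold setDist
  exact Finset.iInf_insert u D fun w => G.edist v w

lemma setDist_anti {V : Type*} (G : SimpleGraph V) (v : V) {D D' : Finset V}
    (h : D ⊆ D') : setDist G v D' ≤ setDist G v D := by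
  unfold setDist
  exact le_iInf₂ fun w hw => iInf₂_le w (h hw)


/-- with a nonincreasing, nonnegative revenue vector
`R 0 ≥ R 1 ≥ ⋯ ≥ R k ≥ 0`, the deterministic revenue function is submodular. -/
theorem revenue_submodular {V : Type*} [Fintype V] [DecidableEq V] (G : SimpleGraph V) (k : ℕ)
    (R : ℕ → ℝ)
    (hR_nonneg : ∀ i ≤ k, 0 ≤ R i)
    (hR_anti : ∀ i j, i ≤ j → j ≤ k → R j ≤ R i)
    (D D' : Finset V) (hDD' : D ⊆ D') (u : V) (hu : u ∉ D') :
    revenue G k R (insert u D') - revenue G k R D' ≤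
      revenue G k R (insert u D) - revenue G k R D := by
  unfold revenue
  rw [← Finset.sum_sub_distrib, ← Finset.sum_sub_distrib]
  apply Finset.sum_le_sum
  intro v _
  show contrib k R (setDist G v (insert u D')) - contrib k R (setDist G v D')
      ≤ contrib k R (setDist G v (insert u D)) - contrib k R (setDist G v D)
  rw [setDist_insert, setDist_insert]
  set e := G.edist v u
  set d := setDist G v D with hd
  set d' := setDist G v D' with hd'
  have hdd : d' ≤ d := setDist_anti G v hDD'
  have hc : ∀ a b : ℕ∞, a ≤ b → contrib k R b ≤ contrib k R a :=
    fun a b h => contrib_anti hR_nonneg hR_anti h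
  by_cases he : d' ≤ e
  · rw [inf_eq_right.mpr he]
    have : contrib k R d ≤ contrib k R (e ⊓ d) := hc _ _ inf_le_right
    linarith
  · push_neg at he
    rw [inf_eq_left.mpr he.le, inf_eq_left.mpr (he.le.trans hdd)]
    have : contrib k R d ≤ contrib k R d' := hc _ _ hdd
    linarith
end

section
/- Let a finite probability space model the A-RMKCG process, and fix any partial realization ψ with positive probability and any user u not yet invited. Then the conditional expected marginal revenue Δ(u|ψ) = E[f(dx(ψ) ∪ {u}, Φ) − f(dx(ψ), Φ) | Φ ∼ ψ] is nonnegative, i.e., the A-RMKCG objective is adaptive monotone. It suffices to prove the pointwise statement: for every full realization φ consistent with ψ, f(dx(ψ) ∪ {u}, φ) ≥ f(dx(ψ), φ). -/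
open Finset

variable {V : Type*} [Fintype V] [DecidableEq V]

/-- One step of the hop-level recursion: from (current level, participants so far)
produce (next level, updated participants). The next level consists of vertices
not yet assigned that have a live edge (`φe`) to a vertex of the current level. -/
def levelStep (G : SimpleGraph V) [DecidableRel G.Adj] (φe : V → V → Bool)
    (p : Finset V × Finset V) : Finset V × Finset V :=
  let next := Finset.univ.filter fun v => v ∉ p.2 ∧ ∃ w ∈ p.1, G.Adj w v ∧ φe w v
  (next, p.2 ∪ next)

/-- The `i`-hop participants for invited set `D` under the realization
(`φv` : vertex states, `φe` : edge states): `D₀ = {u ∈ D : φv u}` and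
`Dᵢ₊₁` = vertices with a live edge to `Dᵢ`, minus all earlier levels. -/
def hopLevel (G : SimpleGraph V) [DecidableRel G.Adj] (φv : V → Bool)
    (φe : V → V → Bool) (D : Finset V) (i : ℕ) : Finset V :=
  ((levelStep G φe)^[i] (D.filter (fun v => φv v), D.filter (fun v => φv v))).1

/-- The total revenue `f(D,φ) = ∑_{i ≤ k} R i · |Dᵢ|`. -/
def realizedRevenue (G : SimpleGraph V) [DecidableRel G.Adj] (φv : V → Bool)
    (φe : V → V → Bool) (k : ℕ) (R : ℕ → ℝ) (D : Finset V) : ℝ :=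
  ∑ i ∈ Finset.range (k + 1), R i * (hopLevel G φv φe D i).card

/-- adaptive monotonicity of the A-RMKCG objective, via the
pointwise statement: for every realization `φ` (vertex states `φv`, symmetric
edge states `φe`) and nonincreasing nonnegative revenue vector, adding one more
invited user never decreases the realized revenue. Taking conditional
expectations over realizations consistent with a partial realization `ψ`, this
gives `Δ(u|ψ) ≥ 0`. -/
theorem realizedRevenue_monotone (G : SimpleGraph V) [DecidableRel G.Adj]
    (φv : V → Bool) (φe : V → V → Bool) (hφe : ∀ u v, φe u v = φe v u)
    (k : ℕ) (R : ℕ → ℝ)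
    (hR_nonneg : ∀ i ≤ k, 0 ≤ R i)
    (hR_anti : ∀ i j, i ≤ j → j ≤ k → R j ≤ R i)
    (D : Finset V) (u : V) :
    realizedRevenue G φv φe k R D ≤ realizedRevenue G φv φe k R (insert u D) := by
  classical
  -- live-edge neighborhood
  let N : Finset V → Finset V := fun S =>
    Finset.univ.filter fun v => ∃ w ∈ S, G.Adj w v ∧ φe w v
  have N_mono : ∀ {S T : Finset V}, S ⊆ T → N S ⊆ N T := by
    intro S T h v hv
    simp only [N, mem_filter, mem_univ, true_and] at hv ⊢
    obtain ⟨w, hw, h2⟩ := hv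
    exact ⟨w, h hw, h2⟩
  have N_union : ∀ S T : Finset V, N (S ∪ T) = N S ∪ N T := by
    intro S T
    ext v
    simp only [N, mem_filter, mem_univ, true_and, mem_union]
    constructor
    · rintro ⟨w, hw | hw, h2⟩
      exacts [Or.inl ⟨w, hw, h2⟩, Or.inr ⟨w, hw, h2⟩]
    · rintro (⟨w, hw, h2⟩ | ⟨w, hw, h2⟩)
      exacts [⟨w, Or.inl hw, h2⟩, ⟨w, Or.inr hw, h2⟩]
  -- full reachability step
  let F : Finset V → Finset V := fun S => S ∪ N S
  have F_mono : ∀ {S T : Finset V}, S ⊆ T → F S ⊆ F T := fun h =>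
    union_subset_union h (N_mono h)
  have Fiter_mono : ∀ (i : ℕ) {S T : Finset V}, S ⊆ T → F^[i] S ⊆ F^[i] T := by
    intro i
    induction i with
    | zero => intro S T h; simpa using h
    | succ i ih =>
      intro S T h
      rw [Function.iterate_succ_apply, Function.iterate_succ_apply]
      exact ih (F_mono h)
  -- structure of levelStep applications
  have step1 : ∀ p : Finset V × Finset V, (levelStep G φe p).1 = N p.1 \ p.2 := by
    intro p
    ext v
    simp only [levelStep, N, mem_filter, mem_univ, true_and, mem_sdiff]
    tauto
  have step2 : ∀ p : Finset V × Finset V,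
      (levelStep G φe p).2 = p.2 ∪ (N p.1 \ p.2) := by
    intro p
    have : (levelStep G φe p).2 = p.2 ∪ (levelStep G φe p).1 := rfl
    rw [this, step1]
  -- key invariant
  have key : ∀ (A : Finset V) (i : ℕ),
      ((levelStep G φe)^[i] (A, A)).1 ⊆ ((levelStep G φe)^[i] (A, A)).2 ∧
      ((levelStep G φe)^[i] (A, A)).2 = F^[i] A ∧
      N ((levelStep G φe)^[i] (A, A)).2 ⊆
        ((levelStep G φe)^[i] (A, A)).2 ∪ N ((levelStep G φe)^[i] (A, A)).1 := by
    intro A i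
    induction i with
    | zero =>
      refine ⟨subset_rfl, rfl, ?_⟩
      exact subset_union_right
    | succ i ih =>
      obtain ⟨h1, h2, h3⟩ := ih
      set P := (levelStep G φe)^[i] (A, A) with hP
      rw [Function.iterate_succ_apply', Function.iterate_succ_apply', ← hP]
      have hnext : (levelStep G φe P).1 = N P.1 \ P.2 := step1 P
      have hsnd : (levelStep G φe P).2 = P.2 ∪ (N P.1 \ P.2) := step2 P
      have hNP1 : N P.1 ⊆ P.2 ∪ (N P.1 \ P.2) := by
        intro v hv
        by_cases hv2 : v ∈ P.2
        · exact mem_union_left _ hv2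
        · exact mem_union_right _ (mem_sdiff.mpr ⟨hv, hv2⟩)
      refine ⟨?_, ?_, ?_⟩
      · rw [hnext, hsnd]
        exact subset_union_right.trans subset_rfl
      · rw [hsnd, ← h2]
        show P.2 ∪ (N P.1 \ P.2) = P.2 ∪ N P.2
        apply Finset.Subset.antisymm
        · apply union_subset subset_union_left
          exact (sdiff_subset.trans (N_mono h1)).trans subset_union_right
        · apply union_subset subset_union_left
          exact h3.trans (union_subset subset_union_left hNP1)
      · rw [hnext, hsnd, N_union]
        apply union_subset
        · intro v hv
          have := h3 hv
          rcases mem_union.mp this with h | h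
          · exact mem_union_left _ (mem_union_left _ h)
          · exact mem_union_left _ (hNP1 h)
        · exact subset_union_right
  -- cardinality telescoping
  have cardsum : ∀ (A : Finset V) (i : ℕ),
      (((levelStep G φe)^[i] (A, A)).2.card : ℝ) =
        ∑ j ∈ Finset.range (i + 1), (((levelStep G φe)^[j] (A, A)).1.card : ℝ) := by
    intro A i
    induction i with
    | zero => simp
    | succ i ih =>
      rw [Finset.sum_range_succ, ← ih]
      set P := (levelStep G φe)^[i] (A, A) with hP
      rw [Function.iterate_succ_apply', ← hP, step2 P, step1 P]
      have hdisj : Disjoint P.2 (N P.1 \ P.2) := disjoint_sdiff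
      rw [Finset.card_union_of_disjoint hdisj]
      push_cast
      ring
  -- Abel summation identity
  have abel : ∀ (c : ℕ → ℝ) (m : ℕ),
      ∑ i ∈ Finset.range (m + 1), R i * c i =
        ∑ i ∈ Finset.range m,
          (R i - R (i + 1)) * (∑ j ∈ Finset.range (i + 1), c j) +
        R m * (∑ j ∈ Finset.range (m + 1), c j) := by
    intro c m
    induction m with
    | zero => simp
    | succ m ih =>
      rw [Finset.sum_range_succ (f := fun i => R i * c i), ih,
        Finset.sum_range_succ
          (f := fun i => (R i - R (i + 1)) * (∑ j ∈ Finset.range (i + 1), c j)),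
        Finset.sum_range_succ (f := fun j => c j) (n := m + 1)]
      ring
  -- package: revenue as Abel form
  have rev_eq : ∀ E : Finset V,
      realizedRevenue G φv φe k R E =
        ∑ i ∈ Finset.range k,
          (R i - R (i + 1)) *
            (((levelStep G φe)^[i] (E.filter (fun v => φv v),
              E.filter (fun v => φv v))).2.card : ℝ) +
        R k *
          (((levelStep G φe)^[k] (E.filter (fun v => φv v),
            E.filter (fun v => φv v))).2.card : ℝ) := by
    intro E
    set A := E.filter (fun v => φv v) with hA
    have : realizedRevenue G φv φe k R E =
        ∑ i ∈ Finset.range (k + 1),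
          R i * (((levelStep G φe)^[i] (A, A)).1.card : ℝ) := by
      unfold realizedRevenue hopLevel
      rfl
    rw [this, abel (fun j => (((levelStep G φe)^[j] (A, A)).1.card : ℝ)) k]
    congr 1
    · apply Finset.sum_congr rfl
      intro i _
      rw [cardsum A i]
    · rw [cardsum A k]
  -- monotone sets
  have hsub : D.filter (fun v => φv v) ⊆ (insert u D).filter (fun v => φv v) :=
    Finset.filter_subset_filter _ (Finset.subset_insert u D)
  have scard : ∀ i : ℕ,
      (((levelStep G φe)^[i] (D.filter (fun v => φv v),
          D.filter (fun v => φv v))).2.card : ℝ) ≤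
      (((levelStep G φe)^[i] ((insert u D).filter (fun v => φv v),
          (insert u D).filter (fun v => φv v))).2.card : ℝ) := by
    intro i
    have h1 := (key (D.filter (fun v => φv v)) i).2.1
    have h2 := (key ((insert u D).filter (fun v => φv v)) i).2.1
    rw [h1, h2]
    exact_mod_cast Finset.card_le_card (Fiter_mono i hsub)
  rw [rev_eq D, rev_eq (insert u D)]
  apply add_le_add
  · apply Finset.sum_le_sum
    intro i hi
    have hik : i < k := Finset.mem_range.mp hi
    have hcoef : 0 ≤ R i - R (i + 1) :=
      sub_nonneg.mpr (hR_anti i (i + 1) (Nat.le_succ i) hik)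
    exact mul_le_mul_of_nonneg_left (scard i) hcoef
  · exact mul_le_mul_of_nonneg_left (scard k) (hR_nonneg k le_rfl)
end

section
/- Let φ be a fixed realization (all vertex and edge states in {0,1}) of the A-RMKCG model with nonincreasing revenue vector R_0 ≥ ... ≥ R_k ≥ 0. Define f(D) = f(D,φ) = Σ_i R_i |D_i(D,φ)| with hop levels D_i as usual. Then for any D ⊆ D' and u ∉ D', f(D ∪ {u}) − f(D) ≥ f(D' ∪ {u}) − f(D') in the special case k = 1. -/
/-! Since `u ∉ D'`, inviting `u` raises `|D₀|` by `[φv u]` for `D` and for `D'` alike, so the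
`R₀`-terms cancel and, as `R₁ ≥ 0`, it suffices that `|D₁|` be submodular. Writing
`X = D₁(D ∪ {u})`, `Y = D₁(D)`, `X' = D₁(D' ∪ {u})`, `Y' = D₁(D')`, one has
`X' ∩ Y ⊆ X ∩ Y'` and `X' ∪ Y ⊆ X ∪ Y'`, hence `|X'| + |Y| ≤ |X| + |Y'|`. -/

open Finset

variable {V : Type*} [Fintype V] [DecidableEq V]

/-- The 0-hop participants for invited set `D` under vertex states `φv`:
the invited users that accept. They earn `R 0` each. -/
def level0 (φv : V → Bool) (D : Finset V) : Finset V :=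
  D.filter fun v => φv v

/-- The 1-hop participants: vertices outside `D₀` with a live edge (`φe`) to a
vertex of `D₀`. They earn `R 1` each. -/
def level1 (G : SimpleGraph V) [DecidableRel G.Adj] (φv : V → Bool)
    (φe : V → V → Bool) (D : Finset V) : Finset V :=
  Finset.univ.filter fun v =>
    v ∉ level0 φv D ∧ ∃ w ∈ level0 φv D, G.Adj w v ∧ φe w v

/-- The realized revenue for `k = 1`: `f(D,φ) = R₀·|D₀| + R₁·|D₁|`. -/
def realizedRevenue1 (G : SimpleGraph V) [DecidableRel G.Adj] (φv : V → Bool)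
    (φe : V → V → Bool) (R0 R1 : ℝ) (D : Finset V) : ℝ :=
  R0 * (level0 φv D).card + R1 * (level1 G φv φe D).card

theorem Finset.card_add_card_le_of_inter_subset_of_union_subset {α : Type*} [DecidableEq α]
    {s t s' t' : Finset α} (hinter : s ∩ t ⊆ s' ∩ t') (hunion : s ∪ t ⊆ s' ∪ t') :
    #s + #t ≤ #s' + #t' := by
  rw [← card_union_add_card_inter, ← card_union_add_card_inter s']
  exact add_le_add (card_le_card hunion) (card_le_card hinter)

section Level0

variable {α : Type*} {φv : α → Bool} {D D' : Finset α} {u v : α}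

lemma mem_level0 : v ∈ level0 φv D ↔ v ∈ D ∧ φv v := mem_filter

lemma level0_mono (h : D ⊆ D') : level0 φv D ⊆ level0 φv D' := filter_subset_filter _ h

lemma card_level0_insert [DecidableEq α] (hu : u ∉ D) :
    #(level0 φv (insert u D)) = #(level0 φv D) + if φv u then 1 else 0 := by
  unfold level0
  split_ifs with h
  · rw [filter_insert, if_pos h, card_insert_of_notMem fun hu' => hu (mem_filter.1 hu').1]
  · rw [filter_insert, if_neg h, add_zero]

end Level0

section Level1

variable {G : SimpleGraph V} [DecidableRel G.Adj] {φv : V → Bool} {φe : V → V → Bool}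
  {D D' : Finset V} {u v : V}

lemma mem_level1 : v ∈ level1 G φv φe D ↔
    v ∉ level0 φv D ∧ ∃ w ∈ level0 φv D, G.Adj w v ∧ φe w v := by
  simp only [level1, mem_filter, mem_univ, true_and]

lemma level1_insert_inter_level1_subset (hDD' : D ⊆ D') :
    level1 G φv φe (insert u D') ∩ level1 G φv φe D ⊆
      level1 G φv φe (insert u D) ∩ level1 G φv φe D' := by
  intro v hv
  simp only [mem_inter, mem_level1] at hv ⊢
  obtain ⟨⟨hv', -⟩, hvD, w, hw, hwv⟩ := hv
  exact ⟨⟨fun h => hv' (level0_mono (insert_subset_insert u hDD') h),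
      w, level0_mono (subset_insert u D) hw, hwv⟩,
    fun h => hv' (level0_mono (subset_insert u D') h), w, level0_mono hDD' hw, hwv⟩

/-- A vertex newly reached from `D'` through `u` is also newly reached from `D` through `u`;
a vertex that `u` pushes from level 1 to level 0 is `u` itself, which is still at level 1
for `D'` because `u ∉ D'`. -/
lemma level1_insert_union_level1_subset (hDD' : D ⊆ D') (hu : u ∉ D') :
    level1 G φv φe (insert u D') ∪ level1 G φv φe D ⊆
      level1 G φv φe (insert u D) ∪ level1 G φv φe D' := by
  intro v hv
  simp only [mem_union, mem_level1] at hv ⊢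
  rcases hv with ⟨hv', w, hw, hwv⟩ | ⟨hvD, w, hw, hwv⟩
  · obtain ⟨hwuD', hφw⟩ := mem_level0.1 hw
    rcases mem_insert.1 hwuD' with rfl | hwD'
    · exact .inl ⟨fun h => hv' (level0_mono (insert_subset_insert w hDD') h),
        w, mem_level0.2 ⟨mem_insert_self w D, hφw⟩, hwv⟩
    · exact .inr ⟨fun h => hv' (level0_mono (subset_insert u D') h),
        w, mem_level0.2 ⟨hwD', hφw⟩, hwv⟩
  · by_cases hvu : v = u
    · exact .inr ⟨fun h => hu (hvu ▸ (mem_level0.1 h).1), w, level0_mono hDD' hw, hwv⟩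
    · refine .inl ⟨fun h => hvD ?_, w, level0_mono (subset_insert u D) hw, hwv⟩
      obtain ⟨hvuD, hφv⟩ := mem_level0.1 h
      exact mem_level0.2 ⟨(mem_insert.1 hvuD).resolve_left hvu, hφv⟩

lemma card_level1_insert_add_card_level1_le (hDD' : D ⊆ D') (hu : u ∉ D') :
    #(level1 G φv φe (insert u D')) + #(level1 G φv φe D) ≤
      #(level1 G φv φe (insert u D)) + #(level1 G φv φe D') :=
  card_add_card_le_of_inter_subset_of_union_subset (level1_insert_inter_level1_subset hDD')
    (level1_insert_union_level1_subset hDD' hu)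

end Level1

theorem realizedRevenue1_submodular_general (G : SimpleGraph V) [DecidableRel G.Adj]
    (φv : V → Bool) (φe : V → V → Bool)
    (R0 R1 : ℝ) (hR1 : 0 ≤ R1)
    (D D' : Finset V) (hDD' : D ⊆ D') (u : V) (hu : u ∉ D') :
    realizedRevenue1 G φv φe R0 R1 (insert u D') - realizedRevenue1 G φv φe R0 R1 D' ≤
      realizedRevenue1 G φv φe R0 R1 (insert u D) - realizedRevenue1 G φv φe R0 R1 D := by
  have hsub : (#(level1 G φv φe (insert u D')) + #(level1 G φv φe D) : ℝ) ≤
      #(level1 G φv φe (insert u D)) + #(level1 G φv φe D') := by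
    exact_mod_cast card_level1_insert_add_card_level1_le hDD' hu
  unfold realizedRevenue1
  rw [card_level0_insert hu, card_level0_insert fun h => hu (hDD' h)]
  push_cast
  linarith [mul_le_mul_of_nonneg_left hsub hR1]

/-- for any fixed realization (`φv`, symmetric `φe`) and
`R₀ ≥ R₁ ≥ 0`, the realized revenue with `k = 1` is submodular in the
invited set. -/
theorem realizedRevenue1_submodular (G : SimpleGraph V) [DecidableRel G.Adj]
    (φv : V → Bool) (φe : V → V → Bool) (hφe : ∀ u v, φe u v = φe v u)
    (R0 R1 : ℝ) (hR01 : R1 ≤ R0) (hR1 : 0 ≤ R1)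
    (D D' : Finset V) (hDD' : D ⊆ D') (u : V) (hu : u ∉ D') :
    realizedRevenue1 G φv φe R0 R1 (insert u D') - realizedRevenue1 G φv φe R0 R1 D' ≤
      realizedRevenue1 G φv φe R0 R1 (insert u D) - realizedRevenue1 G φv φe R0 R1 D :=
  realizedRevenue1_submodular_general G φv φe R0 R1 hR1 D D' hDD' u hu
end

section
/- Let f : Finset V → ℝ be a monotone submodular set function with f(∅) = 0 on a finite ground set V, and let b be a positive integer. Let G_b be the greedy set obtained by b steps of greedily adding the element with maximum marginal gain. Then f(G_b) ≥ (1 − (1 − 1/b)^b)·max_{|S| ≤ b} f(S) ≥ (1 − 1/e)·max_{|S| ≤ b} f(S). -/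
open Finset

/-- Nemhauser–Wolsey–Fisher: for a monotone submodular set
function `f` with `f ∅ = 0` on a finite ground set, the set `Gs b` produced by
`b` greedy steps (each adding an element of maximum marginal gain) satisfies
`f (Gs b) ≥ (1 - (1 - 1/b)^b) · max_{|S| ≤ b} f S ≥ (1 - 1/e) · max_{|S| ≤ b} f S`. -/
theorem greedy_submodular_bound {V : Type*} [Fintype V] [DecidableEq V]
    (f : Finset V → ℝ)
    (hmono : ∀ A B : Finset V, A ⊆ B → f A ≤ f B)
    (hsub : ∀ (A B : Finset V) (x : V), A ⊆ B → x ∉ B →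
      f (insert x B) - f B ≤ f (insert x A) - f A)
    (h0 : f ∅ = 0)
    (b : ℕ) (hb : 0 < b)
    (Gs : ℕ → Finset V) (x : ℕ → V)
    (hG0 : Gs 0 = ∅)
    (hstep : ∀ i, Gs (i + 1) = insert (x i) (Gs i))
    (hgreedy : ∀ i, ∀ y : V, f (insert y (Gs i)) ≤ f (insert (x i) (Gs i)))
    (S : Finset V) (hS : S.card ≤ b) :
    (1 - 1 / Real.exp 1) * f S ≤ (1 - (1 - 1 / (b : ℝ)) ^ b) * f S ∧
      (1 - (1 - 1 / (b : ℝ)) ^ b) * f S ≤ f (Gs b) := by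
  have hb' : (0:ℝ) < b := by exact_mod_cast hb
  have hb1 : (1:ℝ) ≤ b := by exact_mod_cast hb
  have hnn : ∀ A : Finset V, 0 ≤ f A := fun A => h0 ▸ hmono ∅ A (empty_subset A)
  have hq0 : (0:ℝ) ≤ 1 - 1 / (b:ℝ) := by
    have : 1 / (b:ℝ) ≤ 1 := by
      rw [div_le_one hb']; exact hb1
    linarith
  -- subadditivity over unions
  have key : ∀ (A T : Finset V), f (A ∪ T) ≤ f A + ∑ y ∈ T, (f (insert y A) - f A) := by
    intro A T
    induction T using Finset.cons_induction with
    | empty => simp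
    | cons y T' hy ih =>
      rw [Finset.sum_cons]
      by_cases hyA : y ∈ A ∪ T'
      · have heq : A ∪ Finset.cons y T' hy = A ∪ T' := by
          have hyA' : y ∈ A := by
            rcases Finset.mem_union.mp hyA with h | h
            · exact h
            · exact absurd h hy
          rw [Finset.cons_eq_insert, Finset.union_insert, Finset.insert_eq_self.mpr hyA]
        have hterm : 0 ≤ f (insert y A) - f A :=
          sub_nonneg.mpr (hmono A (insert y A) (Finset.subset_insert _ _))
        rw [heq]
        linarith
      · have heq : A ∪ Finset.cons y T' hy = insert y (A ∪ T') := by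
          rw [Finset.cons_eq_insert, Finset.union_insert]
        have h1 := hsub A (A ∪ T') y Finset.subset_union_left hyA
        rw [heq]
        linarith
  -- key per-step decay
  have step : ∀ i, f S - f (Gs (i+1)) ≤ (1 - 1/(b:ℝ)) * (f S - f (Gs i)) := by
    intro i
    set g := f (Gs i)
    have hgain0 : g ≤ f (Gs (i+1)) := by
      rw [hstep i]; exact hmono _ _ (Finset.subset_insert _ _)
    set gain := f (Gs (i+1)) - g with hgain
    have hsum : f S ≤ g + (S.card : ℝ) * gain := by
      have h1 : f S ≤ f (Gs i ∪ S) := hmono _ _ Finset.subset_union_right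
      have h2 := key (Gs i) S
      have h3 : ∑ y ∈ S, (f (insert y (Gs i)) - f (Gs i)) ≤ (S.card : ℝ) * gain := by
        calc ∑ y ∈ S, (f (insert y (Gs i)) - f (Gs i))
            ≤ ∑ _y ∈ S, gain := by
              apply Finset.sum_le_sum
              intro y _
              have := hgreedy i y
              rw [hgain, hstep i]
              linarith
          _ = (S.card : ℝ) * gain := by rw [Finset.sum_const, nsmul_eq_mul]
      linarith
    have hcard : (S.card : ℝ) ≤ b := by exact_mod_cast hS
    have hgainnn : 0 ≤ gain := by linarith
    have h4 : f S ≤ g + (b:ℝ) * gain := by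
      nlinarith
    have h5 : (f S - g) / b ≤ gain := by
      rw [div_le_iff₀ hb']; nlinarith
    have : (1 - 1/(b:ℝ)) * (f S - g) = f S - g - (f S - g)/b := by
      field_simp
    rw [this]
    have : f S - f (Gs (i+1)) = f S - g - gain := by rw [hgain]; ring
    linarith
  -- inductive decay
  have decay : ∀ i, f S - f (Gs i) ≤ (1 - 1/(b:ℝ))^i * f S := by
    intro i
    induction i with
    | zero => simp [hG0, h0]
    | succ i ih =>
      calc f S - f (Gs (i+1)) ≤ (1 - 1/(b:ℝ)) * (f S - f (Gs i)) := step i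
        _ ≤ (1 - 1/(b:ℝ)) * ((1 - 1/(b:ℝ))^i * f S) :=
            mul_le_mul_of_nonneg_left ih hq0
        _ = (1 - 1/(b:ℝ))^(i+1) * f S := by ring
  have main2 : (1 - (1 - 1 / (b : ℝ)) ^ b) * f S ≤ f (Gs b) := by
    have := decay b
    nlinarith [hnn (Gs b)]
  refine ⟨?_, main2⟩
  -- (1-1/b)^b ≤ 1/e
  have hpow : (1 - 1/(b:ℝ))^b ≤ 1 / Real.exp 1 := by
    have h1 : 1 - 1/(b:ℝ) ≤ Real.exp (-(1/(b:ℝ))) := by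
      have := Real.add_one_le_exp (-(1/(b:ℝ)))
      linarith
    have h2 : (1 - 1/(b:ℝ))^b ≤ (Real.exp (-(1/(b:ℝ))))^b :=
      pow_le_pow_left₀ hq0 h1 b
    have h3 : (Real.exp (-(1/(b:ℝ))))^b = Real.exp ((b:ℝ) * (-(1/(b:ℝ)))) :=
      (Real.exp_nat_mul _ b).symm
    have h4 : (b:ℝ) * (-(1/(b:ℝ))) = -1 := by field_simp
    rw [h3, h4, Real.exp_neg] at h2
    simpa [one_div] using h2
  have := mul_le_mul_of_nonneg_right (by linarith : 1 - 1 / Real.exp 1 ≤ 1 - (1 - 1/(b:ℝ))^b) (hnn S)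
  exact this
end
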